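/- arXiv:math-ph/0107016 — 3 statements merged into one kernel-verified Lean document; each statement's English description precedes it below -/
import Mathlib

section
/- Let ρ(t) > 0 and a(t) be twice continuously differentiable, F : ℝ → ℝ differentiable, and define V(x,t) = ((ρ̈a − ρä)/ρ)x − ½(ρ̈/ρ)x² + ρ⁻²F((x−a)/ρ). Then along any solution x(t) of ẍ = −∂V/∂x, the quantity I(x,ẋ,t) = ½[ρ(ẋ − ȧ) − ρ̇(x − a)]² + F((x − a)/ρ) is constant. -/
/-!
Pass to the comoving coordinate `u = (x - a)/ρ` and the momentum
`p = ρ(ẋ - ȧ) - ρ̇(x - a)`, so that `u̇ = p/ρ²` and `ṗ = ρ(ẍ - ä) - ρ̈(x - a)`.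
Newton's equation in the potential `V` turns into `ṗ = -F'(u)/ρ²`, hence
`İ = p ṗ + F'(u) u̇ = 0`.
-/

noncomputable def comovingMomentum (ρ a x : ℝ → ℝ) (t : ℝ) : ℝ :=
  ρ t * (deriv x t - deriv a t) - deriv ρ t * (x t - a t)

noncomputable def noetherInvariant (ρ a F x : ℝ → ℝ) (t : ℝ) : ℝ :=
  1/2 * comovingMomentum ρ a x t ^ 2 + F ((x t - a t) / ρ t)

noncomputable def noetherPotential (ρ a F : ℝ → ℝ) (y t : ℝ) : ℝ :=
  ((deriv (deriv ρ) t * a t - ρ t * deriv (deriv a) t) / ρ t) * y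
    - 1/2 * (deriv (deriv ρ) t / ρ t) * y^2
    + (ρ t)⁻¹ ^ 2 * F ((y - a t) / ρ t)

section

variable {ρ a F x : ℝ → ℝ} {t : ℝ}

theorem hasDerivAt_comovingCoord (hρ : DifferentiableAt ℝ ρ t) (ha : DifferentiableAt ℝ a t)
    (hx : DifferentiableAt ℝ x t) (hρt : ρ t ≠ 0) :
    HasDerivAt (fun s => (x s - a s) / ρ s) (comovingMomentum ρ a x t / ρ t ^ 2) t :=
  ((hx.hasDerivAt.sub ha.hasDerivAt).div hρ.hasDerivAt hρt).congr_deriv <| by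
    simp only [comovingMomentum, Pi.sub_apply]; ring

theorem hasDerivAt_comovingMomentum (hρ : DifferentiableAt ℝ ρ t)
    (hρ' : DifferentiableAt ℝ (deriv ρ) t) (ha : DifferentiableAt ℝ a t)
    (ha' : DifferentiableAt ℝ (deriv a) t) (hx : DifferentiableAt ℝ x t)
    (hx' : DifferentiableAt ℝ (deriv x) t) :
    HasDerivAt (comovingMomentum ρ a x)
      (ρ t * (deriv (deriv x) t - deriv (deriv a) t) - deriv (deriv ρ) t * (x t - a t)) t :=
  ((hρ.hasDerivAt.mul (hx'.hasDerivAt.sub ha'.hasDerivAt)).sub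
    (hρ'.hasDerivAt.mul (hx.hasDerivAt.sub ha.hasDerivAt))).congr_deriv
    (by simp only [Pi.sub_apply]; ring)

theorem hasDerivAt_noetherPotential {y : ℝ} (hF : DifferentiableAt ℝ F ((y - a t) / ρ t)) :
    HasDerivAt (noetherPotential ρ a F · t)
      ((deriv (deriv ρ) t * a t - ρ t * deriv (deriv a) t) / ρ t
        - deriv (deriv ρ) t / ρ t * y + deriv F ((y - a t) / ρ t) / ρ t ^ 3) y := by
  have hcoord : HasDerivAt (fun y => (y - a t) / ρ t) (1 / ρ t) y := by
    simpa using ((hasDerivAt_id y).sub_const (a t)).div_const (ρ t)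
  have := (((hasDerivAt_id y).const_mul
      ((deriv (deriv ρ) t * a t - ρ t * deriv (deriv a) t) / ρ t)).sub
    ((hasDerivAt_pow 2 y).const_mul (1/2 * (deriv (deriv ρ) t / ρ t)))).add
    ((hF.hasDerivAt.comp y hcoord).const_mul ((ρ t)⁻¹ ^ 2))
  exact this.congr_deriv (by ring)

theorem hasDerivAt_comovingMomentum_of_newton (hρ : ContDiff ℝ 2 ρ) (hρt : ρ t ≠ 0)
    (ha : ContDiff ℝ 2 a) (hF : DifferentiableAt ℝ F ((x t - a t) / ρ t)) (hx : ContDiff ℝ 2 x)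
    (heq : deriv (deriv x) t = - deriv (noetherPotential ρ a F · t) (x t)) :
    HasDerivAt (comovingMomentum ρ a x) (-deriv F ((x t - a t) / ρ t) / ρ t ^ 2) t := by
  refine (hasDerivAt_comovingMomentum (hρ.differentiable two_ne_zero t)
    (hρ.differentiable_deriv_two t) (ha.differentiable two_ne_zero t)
    (ha.differentiable_deriv_two t) (hx.differentiable two_ne_zero t)
    (hx.differentiable_deriv_two t)).congr_deriv ?_
  rw [heq, (hasDerivAt_noetherPotential hF).deriv]
  field_simp
  ring

theorem hasDerivAt_noetherInvariant_of_newton (hρ : ContDiff ℝ 2 ρ) (hρt : ρ t ≠ 0)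
    (ha : ContDiff ℝ 2 a) (hF : DifferentiableAt ℝ F ((x t - a t) / ρ t)) (hx : ContDiff ℝ 2 x)
    (heq : deriv (deriv x) t = - deriv (noetherPotential ρ a F · t) (x t)) :
    HasDerivAt (noetherInvariant ρ a F x) 0 t := by
  have hp := hasDerivAt_comovingMomentum_of_newton hρ hρt ha hF hx heq
  have hu := hasDerivAt_comovingCoord (hρ.differentiable two_ne_zero t)
    (ha.differentiable two_ne_zero t) (hx.differentiable two_ne_zero t) hρt
  refine ((hp.pow 2).const_mul (1/2 : ℝ) |>.add (hF.hasDerivAt.comp t hu)).congr_deriv ?_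
  ring

end

/-- Let `ρ(t) > 0` and `a(t)` be C², `F` differentiable, and
`V(x,t) = ((ρ̈a − ρä)/ρ)x − ½(ρ̈/ρ)x² + ρ⁻²F((x−a)/ρ)`.  Then along any C²
solution of `ẍ = −∂V/∂x`, the Noether invariant
`I = ½[ρ(ẋ − ȧ) − ρ̇(x − a)]² + F((x − a)/ρ)` is constant. -/
theorem noether_invariant_is_constant
    (ρ a : ℝ → ℝ) (F : ℝ → ℝ) (x : ℝ → ℝ)
    (hρ : ContDiff ℝ 2 ρ) (hρpos : ∀ t, 0 < ρ t)
    (ha : ContDiff ℝ 2 a)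
    (hF : Differentiable ℝ F)
    (hx : ContDiff ℝ 2 x)
    (V : ℝ → ℝ → ℝ)
    (hV : ∀ y t : ℝ, V y t =
      ((deriv (deriv ρ) t * a t - ρ t * deriv (deriv a) t) / ρ t) * y
      - 1/2 * (deriv (deriv ρ) t / ρ t) * y^2
      + (ρ t)⁻¹ ^ 2 * F ((y - a t) / ρ t))
    -- Newton's equation ẍ = −∂V/∂x along the path:
    (heq : ∀ t : ℝ, deriv (deriv x) t = - deriv (fun y => V y t) (x t)) :
    ∀ t₁ t₂ : ℝ,
      (1/2 * (ρ t₁ * (deriv x t₁ - deriv a t₁) - deriv ρ t₁ * (x t₁ - a t₁))^2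
        + F ((x t₁ - a t₁) / ρ t₁))
      = (1/2 * (ρ t₂ * (deriv x t₂ - deriv a t₂) - deriv ρ t₂ * (x t₂ - a t₂))^2
        + F ((x t₂ - a t₂) / ρ t₂)) := by
  obtain rfl : V = noetherPotential ρ a F := funext fun y => funext (hV y)
  have hI (t : ℝ) : HasDerivAt (noetherInvariant ρ a F x) 0 t :=
    hasDerivAt_noetherInvariant_of_newton hρ (hρpos t).ne' ha (hF _) hx (heq t)
  exact is_const_of_deriv_eq_zero (fun t => (hI t).differentiableAt) (fun t => (hI t).deriv)
end

section
/- (Harmonic-oscillator invariant with quadratic F) Let ρ(t) > 0 be C², K > 0, and suppose x(t) is a C² solution of ẍ = −∂V/∂x where V(x,t) = −½(ρ̈/ρ)x² + ρ⁻²·(K/2)(x/ρ)². Then I(t) = ½[ρẋ − ρ̇x]² + (K/2)(x/ρ)² is constant in t. -/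
/-- (Harmonic-oscillator invariant with quadratic `F`) Let `ρ(t) > 0`
be C², `K > 0`, and `V(x,t) = −½(ρ̈/ρ)x² + (K/2)x²/ρ⁴`.  Then along any C² solution
of `ẍ = −∂V/∂x`, the quantity `I(t) = ½[ρẋ − ρ̇x]² + (K/2)(x/ρ)²` is constant. -/
theorem harmonic_oscillator_quadratic_invariant
    (ρ x : ℝ → ℝ) (K : ℝ)
    (hρ : ContDiff ℝ 2 ρ) (hρpos : ∀ t, 0 < ρ t)
    (hK : 0 < K)
    (hx : ContDiff ℝ 2 x)
    (V : ℝ → ℝ → ℝ)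
    (hV : ∀ y t : ℝ, V y t =
      - 1/2 * (deriv (deriv ρ) t / ρ t) * y^2 + K/2 * y^2 / (ρ t)^4)
    (heq : ∀ t : ℝ, deriv (deriv x) t = - deriv (fun y => V y t) (x t)) :
    ∀ t₁ t₂ : ℝ,
      1/2 * (ρ t₁ * deriv x t₁ - deriv ρ t₁ * x t₁)^2 + K/2 * (x t₁ / ρ t₁)^2
      = 1/2 * (ρ t₂ * deriv x t₂ - deriv ρ t₂ * x t₂)^2 + K/2 * (x t₂ / ρ t₂)^2 := by
  have hρ1 : ContDiff ℝ 1 (deriv ρ) := by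
    have := (contDiff_succ_iff_deriv.mp (show ContDiff ℝ (1+1) ρ by exact_mod_cast hρ)).2.2
    exact this
  have hx1 : ContDiff ℝ 1 (deriv x) := by
    have := (contDiff_succ_iff_deriv.mp (show ContDiff ℝ (1+1) x by exact_mod_cast hx)).2.2
    exact this
  have hρd : Differentiable ℝ ρ := hρ.differentiable (by norm_num)
  have hxd : Differentiable ℝ x := hx.differentiable (by norm_num)
  have hρd1 : Differentiable ℝ (deriv ρ) := hρ1.differentiable (by norm_num)
  have hxd1 : Differentiable ℝ (deriv x) := hx1.differentiable (by norm_num)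
  -- the equation of motion in explicit form
  have heq' : ∀ t, deriv (deriv x) t
      = deriv (deriv ρ) t / ρ t * x t - K * x t / (ρ t)^4 := by
    intro t
    have hne : ρ t ≠ 0 := (hρpos t).ne'
    have hVd : HasDerivAt (fun y => V y t)
        (- 1/2 * (deriv (deriv ρ) t / ρ t) * (2 * x t) + K/2 * (2 * x t) / (ρ t)^4) (x t) := by
      have h1 : HasDerivAt (fun y : ℝ => y^2) (2 * x t) (x t) := by
        simpa using hasDerivAt_pow 2 (x t)
      have : HasDerivAt (fun y : ℝ =>
          - 1/2 * (deriv (deriv ρ) t / ρ t) * y^2 + K/2 * y^2 / (ρ t)^4)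
          (- 1/2 * (deriv (deriv ρ) t / ρ t) * (2 * x t) + K/2 * (2 * x t) / (ρ t)^4) (x t) := by
        have h2 := (h1.const_mul (- 1/2 * (deriv (deriv ρ) t / ρ t)))
        have h3 := ((h1.const_mul (K/2)).div_const ((ρ t)^4))
        simpa [Pi.add_def, mul_comm, mul_assoc, mul_div_assoc] using h2.add h3
      exact this.congr_of_eventuallyEq (by filter_upwards with y; rw [hV])
    rw [heq t, hVd.deriv]
    field_simp
    ring
  -- define the invariant
  set f : ℝ → ℝ := fun t =>
    1/2 * (ρ t * deriv x t - deriv ρ t * x t)^2 + K/2 * (x t / ρ t)^2 with hf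
  have key : ∀ t, HasDerivAt f 0 t := by
    intro t
    have hne : ρ t ≠ 0 := (hρpos t).ne'
    have hρt : HasDerivAt ρ (deriv ρ t) t := (hρd t).hasDerivAt
    have hρ't : HasDerivAt (deriv ρ) (deriv (deriv ρ) t) t := (hρd1 t).hasDerivAt
    have hxt : HasDerivAt x (deriv x t) t := (hxd t).hasDerivAt
    have hx't : HasDerivAt (deriv x) (deriv (deriv x) t) t := (hxd1 t).hasDerivAt
    have hg : HasDerivAt (fun t => ρ t * deriv x t - deriv ρ t * x t)
        (deriv ρ t * deriv x t + ρ t * deriv (deriv x) t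
          - (deriv (deriv ρ) t * x t + deriv ρ t * deriv x t)) t :=
      (hρt.mul hx't).sub (hρ't.mul hxt)
    have hq : HasDerivAt (fun t => x t / ρ t)
        ((deriv x t * ρ t - x t * deriv ρ t) / (ρ t)^2) t := hxt.div hρt hne
    have hI : HasDerivAt f
        (1/2 * (2 * (ρ t * deriv x t - deriv ρ t * x t) *
            (deriv ρ t * deriv x t + ρ t * deriv (deriv x) t
              - (deriv (deriv ρ) t * x t + deriv ρ t * deriv x t)))
          + K/2 * (2 * (x t / ρ t) * ((deriv x t * ρ t - x t * deriv ρ t) / (ρ t)^2))) t := by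
      have h1 := (hg.pow 2).const_mul (1/2 : ℝ)
      have h2 := (hq.pow 2).const_mul (K/2 : ℝ)
      simpa [Pi.add_def, hf, pow_one, mul_comm, mul_assoc, mul_left_comm] using h1.add h2
    convert hI using 1
    rw [heq' t]
    field_simp
    ring
  intro t₁ t₂
  have : f t₁ = f t₂ := by
    have hconst := is_const_of_deriv_eq_zero (f := f)
      (fun t => (key t).differentiableAt) (fun t => (key t).deriv) t₁ t₂
    exact hconst
  simpa [hf] using this
end

section
/- With ρ(t) > 0 and a(t) twice differentiable, the Lagrangian L = ½ẋ² − V(x,t) with V(x,t) = ((ρ̈a − ρä)/ρ)x − ½(ρ̈/ρ)x² + ρ⁻²F((x−a)/ρ) decomposes along any C² path x(t) as L = dX/dt + L₀, where X(t) = (ρ̇/(2ρ))x² + (W/ρ)x − G, W = ȧρ − aρ̇, G(t) = ∫_{t'}^t W²/(2ρ²)ds, and L₀ = (ρ²/2)[d/dt((x−a)/ρ)]² − ρ⁻²F((x−a)/ρ). -/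
/-!
Write `x = a + ρ q`. The kinetic energy `½ẋ²` then splits into `(ρ²/2) q̇²` plus terms linear and
quadratic in `x`; with the potential `V` chosen as it is, these terms are exactly the time derivative
of `X`, the part `W²/(2ρ²)` that does not involve `x` being absorbed by `G`, whose derivative it is.
-/

theorem kinetic_sub_potential_eq_gauge_add_kinetic {K : Type*} [Field K] [CharZero K]
    (ρ ρ' ρ'' a a' a'' x x' : K) {w w' : K} (hρ : ρ ≠ 0)
    (hw : w = a' * ρ - a * ρ') (hw' : w' = a'' * ρ - a * ρ'') :
    1 / 2 * x' ^ 2 - ((ρ'' * a - ρ * a'') / ρ * x - 1 / 2 * (ρ'' / ρ) * x ^ 2)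
      = ((ρ'' * ρ - ρ' ^ 2) / (2 * ρ ^ 2) * x ^ 2 + ρ' / ρ * x * x'
          + (w' * ρ - w * ρ') / ρ ^ 2 * x + w / ρ * x' - w ^ 2 / (2 * ρ ^ 2))
        + ρ ^ 2 / 2 * (((x' - a') * ρ - (x - a) * ρ') / ρ ^ 2) ^ 2 := by
  subst hw hw'
  field_simp
  ring

theorem hasDerivAt_quadratic_gauge {𝕜 : Type*} [NontriviallyNormedField 𝕜] [CharZero 𝕜]
    {ρ ρ₁ W G x : 𝕜 → 𝕜} {t ρ₂ w' g' x' : 𝕜}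
    (hρ : HasDerivAt ρ (ρ₁ t) t) (hρ₁ : HasDerivAt ρ₁ ρ₂ t) (hW : HasDerivAt W w' t)
    (hG : HasDerivAt G g' t) (hx : HasDerivAt x x' t) (hρt : ρ t ≠ 0) :
    HasDerivAt (fun s => ρ₁ s / (2 * ρ s) * x s ^ 2 + W s / ρ s * x s - G s)
      ((ρ₂ * ρ t - ρ₁ t ^ 2) / (2 * ρ t ^ 2) * x t ^ 2 + ρ₁ t / ρ t * x t * x'
        + (w' * ρ t - W t * ρ₁ t) / ρ t ^ 2 * x t + W t / ρ t * x' - g') t := by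
  have h2ρ : 2 * ρ t ≠ 0 := mul_ne_zero two_ne_zero hρt
  refine ((((hρ₁.div (hρ.const_mul 2) h2ρ).mul (hx.pow 2)).add
    ((hW.div hρ hρt).mul hx)).sub hG).congr_deriv ?_
  simp only [Pi.pow_apply, Pi.div_apply]
  field_simp
  ring

theorem ContDiff.hasDerivAt_deriv {𝕜 F : Type*} [NontriviallyNormedField 𝕜]
    [NormedAddCommGroup F] [NormedSpace 𝕜 F] {f : 𝕜 → F} (hf : ContDiff 𝕜 2 f) (t : 𝕜) :
    HasDerivAt (deriv f) (deriv (deriv f) t) t :=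
  (hf.differentiable_deriv_two t).hasDerivAt

theorem lagrangian_total_derivative_decomposition_general
    (ρ a F x : ℝ → ℝ) (t' : ℝ)
    (hρ : ContDiff ℝ 2 ρ) (hρpos : ∀ t, 0 < ρ t)
    (ha : ContDiff ℝ 2 a)
    (hx : ContDiff ℝ 1 x)
    (V : ℝ → ℝ → ℝ)
    (hV : ∀ y t : ℝ, V y t =
      ((deriv (deriv ρ) t * a t - ρ t * deriv (deriv a) t) / ρ t) * y
      - 1/2 * (deriv (deriv ρ) t / ρ t) * y^2
      + (ρ t)⁻¹ ^ 2 * F ((y - a t) / ρ t))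
    (W G X : ℝ → ℝ)
    (hW : ∀ t, W t = deriv a t * ρ t - a t * deriv ρ t)
    (hG : ∀ t, G t = ∫ s in t'..t, (W s)^2 / (2 * (ρ s)^2))
    (hX : ∀ t, X t = (deriv ρ t / (2 * ρ t)) * (x t)^2 + (W t / ρ t) * x t - G t) :
    ∀ t : ℝ,
      1/2 * (deriv x t)^2 - V (x t) t
      = deriv X t
        + ((ρ t)^2 / 2 * (deriv (fun s => (x s - a s) / ρ s) t)^2
            - (ρ t)⁻¹ ^ 2 * F ((x t - a t) / ρ t)) := by
  intro t
  have hρt : ρ t ≠ 0 := (hρpos t).ne'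
  have Hρ : HasDerivAt ρ (deriv ρ t) t := (hρ.differentiable two_ne_zero t).hasDerivAt
  have Ha : HasDerivAt a (deriv a t) t := (ha.differentiable two_ne_zero t).hasDerivAt
  have Hx : HasDerivAt x (deriv x t) t := (hx.differentiable one_ne_zero t).hasDerivAt
  have HW : HasDerivAt W (deriv (deriv a) t * ρ t - a t * deriv (deriv ρ) t) t := by
    rw [funext hW]
    refine (((ha.hasDerivAt_deriv t).mul Hρ).sub (Ha.mul (hρ.hasDerivAt_deriv t))).congr_deriv ?_
    ring
  have hWcont : Continuous W := by
    rw [funext hW]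
    exact ((ha.continuous_deriv one_le_two).mul hρ.continuous).sub
      (ha.continuous.mul (hρ.continuous_deriv one_le_two))
  have HG : HasDerivAt G (W t ^ 2 / (2 * ρ t ^ 2)) t := by
    rw [funext hG]
    refine (Continuous.integral_hasStrictDerivAt ?_ t' t).hasDerivAt
    exact (hWcont.pow 2).div (by fun_prop) fun s => by positivity [hρpos s]
  have Hq : HasDerivAt (fun s => (x s - a s) / ρ s)
      (((deriv x t - deriv a t) * ρ t - (x t - a t) * deriv ρ t) / ρ t ^ 2) t :=
    (Hx.sub Ha).div Hρ hρt
  rw [funext hX, (hasDerivAt_quadratic_gauge Hρ (hρ.hasDerivAt_deriv t) HW HG Hx hρt).deriv,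
    Hq.deriv, hV]
  linear_combination kinetic_sub_potential_eq_gauge_add_kinetic (ρ t) (deriv ρ t)
    (deriv (deriv ρ) t) (a t) (deriv a t) (deriv (deriv a) t) (x t) (deriv x t) hρt (hW t) rfl

/-- With `ρ > 0` and `a` twice differentiable, the Lagrangian
`L = ½ẋ² − V(x,t)` with
`V(x,t) = ((ρ̈a − ρä)/ρ)x − ½(ρ̈/ρ)x² + ρ⁻²F((x−a)/ρ)` decomposes along any path as
`L = dX/dt + L₀`, where `X = (ρ̇/(2ρ))x² + (W/ρ)x − G`, `W = ȧρ − aρ̇`,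
`G(t) = ∫_{t'}^t W²/(2ρ²) ds`, and `L₀ = (ρ²/2)[d/dt((x−a)/ρ)]² − ρ⁻²F((x−a)/ρ)`. -/
theorem lagrangian_total_derivative_decomposition
    (ρ a F x : ℝ → ℝ) (t' : ℝ)
    (hρ : ContDiff ℝ 2 ρ) (hρpos : ∀ t, 0 < ρ t)
    (ha : ContDiff ℝ 2 a)
    (hF : Continuous F)
    (hx : ContDiff ℝ 1 x)
    (V : ℝ → ℝ → ℝ)
    (hV : ∀ y t : ℝ, V y t =
      ((deriv (deriv ρ) t * a t - ρ t * deriv (deriv a) t) / ρ t) * y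
      - 1/2 * (deriv (deriv ρ) t / ρ t) * y^2
      + (ρ t)⁻¹ ^ 2 * F ((y - a t) / ρ t))
    (W G X : ℝ → ℝ)
    (hW : ∀ t, W t = deriv a t * ρ t - a t * deriv ρ t)
    (hG : ∀ t, G t = ∫ s in t'..t, (W s)^2 / (2 * (ρ s)^2))
    (hX : ∀ t, X t = (deriv ρ t / (2 * ρ t)) * (x t)^2 + (W t / ρ t) * x t - G t) :
    ∀ t : ℝ,
      1/2 * (deriv x t)^2 - V (x t) t
      = deriv X t
        + ((ρ t)^2 / 2 * (deriv (fun s => (x s - a s) / ρ s) t)^2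
            - (ρ t)⁻¹ ^ 2 * F ((x t - a t) / ρ t)) :=
  lagrangian_total_derivative_decomposition_general ρ a F x t' hρ hρpos ha hx V hV W G X hW hG hX
end
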